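/- Let M be a linear space of quadratic polynomials over F_2^n such that rank₂(p) ≤ r for all p ∈ M. Then there exists a linear subspace V ⊆ F_2^n of codimension at most 4r such that the restriction p|_V is an affine function for every p ∈ M. -/

import Mathlib

open Finset

/-- `f` agrees with a polynomial of total degree at most `d`. -/
def IsPolyDegLE {K : Type*} [CommSemiring K] {σ : Type*} (f : (σ → K) → K) (d : ℕ) : Prop :=
  ∃ P : MvPolynomial σ K, P.totalDegree ≤ d ∧ ∀ x, MvPolynomial.eval x P = f x

/-- `q` can be written as a sum of `r` products of two linear forms plus an
affine function. -/
def HasRank2 {K : Type*} [Field K] {M : Type*} [AddCommGroup M] [Module K M]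
    (q : M → K) (r : ℕ) : Prop :=
  ∃ (L L' : Fin r → M →ₗ[K] K) (L0 : M →ₗ[K] K) (b : K),
    ∀ x, q x = (∑ i, L i x * L' i x) + L0 x + b

/-- `rank₂ q`: the minimal `r` in such a representation. -/
noncomputable def rank2 {K : Type*} [Field K] {M : Type*} [AddCommGroup M] [Module K M]
    (q : M → K) : ℕ :=
  sInf {r | HasRank2 q r}

/-! The polar form `B_q(x, y) = q(x + y) - q(x) - q(y) + q(0)` of a quadratic `q` with
`rank₂ q ≤ r` is a symmetric bilinear form of rank at most `2r`, and over `F₂` the function `q` is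
affine on any subspace where `B_q` vanishes. The polar forms of the members of `M` are closed
under addition, and an additive family of symmetric forms of rank at most `R` has a common
isotropic subspace of codimension at most `2R`: if `B₁` has maximal rank `m`, then
`rank B₁ + 2 rank (B|ker B₁) ≤ rank (B₁ + B) + rank B ≤ 2m` shows that the family restricted to
`ker B₁` has rank at most `m / 2`; recursing inside `ker B₁` costs codimension
`m + 2 (m / 2) ≤ 2m`. -/

open Module
open LinearMap (BilinForm range ker)

section FiniteRank

variable {K V V' : Type*} [Field K] [AddCommGroup V] [Module K V] [AddCommGroup V'] [Module K V']
  [FiniteDimensional K V]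

theorem Submodule.finrank_map_add_finrank_inf_ker (f : V →ₗ[K] V') (p : Submodule K V) :
    finrank K (p.map f) + finrank K (p ⊓ ker f : Submodule K V) = finrank K p := by
  rw [← LinearMap.range_domRestrict, ← Submodule.map_comap_subtype,
    Submodule.finrank_map_subtype_eq, ← LinearMap.ker_domRestrict]
  exact LinearMap.finrank_range_add_finrank_ker _

theorem LinearMap.finrank_range_add_le (f g : V →ₗ[K] V') :
    finrank K (range (f + g)) ≤ finrank K (range f) + finrank K (range g) :=
  (Submodule.finrank_mono (LinearMap.range_add_le f g)).trans
    (Submodule.finrank_add_le_finrank_add_finrank _ _)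

theorem LinearMap.finrank_range_sub_le (f g : V →ₗ[K] V') :
    finrank K (range (f - g)) ≤ finrank K (range f) + finrank K (range g) := by
  rw [sub_eq_add_neg, ← LinearMap.range_neg g]
  exact LinearMap.finrank_range_add_le f (-g)

end FiniteRank

namespace LinearMap.BilinForm

variable {K V : Type*} [Field K] [AddCommGroup V] [Module K V]

lemma restrict_add (B B' : BilinForm K V) (W : Submodule K V) :
    (B + B').restrict W = B.restrict W + B'.restrict W := rfl

lemma restrict_sub (B B' : BilinForm K V) (W : Submodule K V) :
    (B - B').restrict W = B.restrict W - B'.restrict W := rfl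

lemma range_restrict (B : BilinForm K V) (W : Submodule K V) :
    range (B.restrict W) = (W.map B).map W.subtype.dualMap := by
  change range (W.subtype.dualMap ∘ₗ B ∘ₗ W.subtype) = _
  rw [LinearMap.range_comp, LinearMap.range_comp, Submodule.range_subtype]

theorem finrank_range_linMulLin_le (f g : V →ₗ[K] K) :
    finrank K (range (linMulLin f g)) ≤ 1 := by
  refine (Submodule.finrank_mono ?_).trans
    ((finrank_span_le_card ({g} : Set (V →ₗ[K] K))).trans_eq (by simp))
  rintro _ ⟨x, rfl⟩
  exact Submodule.mem_span_singleton.mpr ⟨f x, LinearMap.ext fun y => by simp⟩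

variable [FiniteDimensional K V]

theorem finrank_range_restrict_add_finrank_range_restrict_orthogonal_le {B : BilinForm K V}
    (hB : B.IsRefl) (W : Submodule K V) :
    finrank K (range (B.restrict W)) + finrank K (range (B.restrict (B.orthogonal W)))
      ≤ finrank K (range B) := by
  have hW : finrank K (range (B.restrict W)) ≤ finrank K ((range B).map W.subtype.dualMap) := by
    rw [range_restrict]
    exact Submodule.finrank_mono (Submodule.map_mono (LinearMap.map_le_range))
  have hWperp : finrank K (range (B.restrict (B.orthogonal W)))
      ≤ finrank K (range B ⊓ ker W.subtype.dualMap : Submodule K (Dual K V)) := by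
    rw [range_restrict]
    refine (Submodule.finrank_map_le _ _).trans (Submodule.finrank_mono ?_)
    rintro _ ⟨v, hv, rfl⟩
    refine ⟨⟨v, rfl⟩, LinearMap.ext fun w => hB _ _ (hv w w.2)⟩
  have hsplit : finrank K ((range B).map W.subtype.dualMap)
      + finrank K (range B ⊓ ker W.subtype.dualMap : Submodule K (Dual K V))
      = finrank K (range B) :=
    Submodule.finrank_map_add_finrank_inf_ker _ _
  omega

theorem finrank_range_restrict_of_sup_ker_eq_top {B : BilinForm K V} (hB : B.IsRefl)
    {U : Submodule K V} (hU : U ⊔ ker B = ⊤) :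
    finrank K (range (B.restrict U)) = finrank K (range B) := by
  have hmap : U.map B = range B := by
    refine le_antisymm LinearMap.map_le_range ?_
    rw [LinearMap.range_eq_map, LinearMap.map_le_map_iff, hU]
  have hinj : range B ⊓ ker U.subtype.dualMap = ⊥ := by
    rw [Submodule.eq_bot_iff]
    rintro _ ⟨⟨v, rfl⟩, hv⟩
    have hvU : ∀ u ∈ U, B v u = 0 := fun u hu => LinearMap.congr_fun hv ⟨u, hu⟩
    have hvker : ∀ k ∈ ker B, B v k = 0 := fun k hk => hB _ _ (by simp [LinearMap.mem_ker.mp hk])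
    ext w
    obtain ⟨u, hu, k, hk, rfl⟩ := Submodule.mem_sup.mp (hU ▸ Submodule.mem_top : w ∈ U ⊔ ker B)
    simp [hvU u hu, hvker k hk]
  have := Submodule.finrank_map_add_finrank_inf_ker U.subtype.dualMap (range B)
  rw [hinj, finrank_bot, add_zero] at this
  rw [range_restrict, hmap, this]

theorem exists_le_nondegenerate_restrict {B : BilinForm K V} (hB : B.IsRefl) (W : Submodule K V) :
    ∃ W' ≤ W, (B.restrict W').Nondegenerate ∧ finrank K W' = finrank K (range (B.restrict W)) := by
  obtain ⟨C, hC⟩ := Submodule.exists_isCompl (ker (B.restrict W))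
  refine ⟨C.map W.subtype, Submodule.map_subtype_le _ _, ?_, ?_⟩
  · refine B.nondegenerate_restrict_of_disjoint_orthogonal hB ?_
    rw [Submodule.disjoint_def]
    rintro _ ⟨c, hc, rfl⟩ hperp
    suffices c ∈ ker (B.restrict W) ⊓ C by simpa [hC.inf_eq_bot] using this
    refine ⟨LinearMap.ext fun w => ?_, hc⟩
    obtain ⟨k, hk, c', hc', rfl⟩ := Submodule.mem_sup.mp (hC.sup_eq_top ▸ Submodule.mem_top : w ∈ _)
    have hck : B c k = 0 := hB _ _ (LinearMap.congr_fun (LinearMap.mem_ker.mp hk) c)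
    have hcc' : B c c' = 0 := hB _ _ (hperp _ ⟨c', hc', rfl⟩)
    simp [hck, hcc']
  · rw [Submodule.finrank_map_subtype_eq]
    have := Submodule.finrank_add_eq_of_isCompl hC
    have := LinearMap.finrank_range_add_finrank_ker (B.restrict W)
    omega

/- Inside `ker B₁` pick `N` on which `B` is nondegenerate of rank `rank (B|ker B₁)`. Then `B` and
`B₁ + B` agree on `N` and have the same orthogonal `N^⊥`, each splitting off `rank (B|N) = dim N`,
while `B₁ = (B₁ + B) - B` keeps its full rank on `N^⊥` because `N^⊥ + ker B₁ = V`. -/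
theorem finrank_range_add_two_mul_finrank_range_restrict_ker_le {B₁ B : BilinForm K V}
    (h₁ : B₁.IsSymm) (h : B.IsSymm) :
    finrank K (range B₁) + 2 * finrank K (range (B.restrict (ker B₁)))
      ≤ finrank K (range (B₁ + B)) + finrank K (range B) := by
  obtain ⟨N, hN, hnd, hdim⟩ := exists_le_nondegenerate_restrict h.isRefl (ker B₁)
  have hB₁N : ∀ a ∈ N, B₁ a = 0 := fun a ha => hN ha
  have hCN : (B₁ + B).restrict N = B.restrict N := by
    ext a a'
    simp [hB₁N a a.2]
  have hCperp : (B₁ + B).orthogonal N = B.orthogonal N := by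
    ext v
    simp +contextual [mem_orthogonal_iff, hB₁N]
  have hrankN : finrank K (range (B.restrict N)) = finrank K N :=
    LinearMap.finrank_range_of_inj (LinearMap.ker_eq_bot.mp hnd.ker_eq_bot)
  have hsup : B.orthogonal N ⊔ ker B₁ = ⊤ := by
    rw [eq_top_iff, ← (isCompl_orthogonal_of_restrict_nondegenerate h.isRefl hnd).sup_eq_top,
      sup_comm]
    exact sup_le_sup_left hN _
  have hB := finrank_range_restrict_add_finrank_range_restrict_orthogonal_le h.isRefl N
  have hC := finrank_range_restrict_add_finrank_range_restrict_orthogonal_le (h₁.add h).isRefl N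
  rw [hCN, hCperp] at hC
  have hB₁perp : B₁.restrict (B.orthogonal N)
      = (B₁ + B).restrict (B.orthogonal N) - B.restrict (B.orthogonal N) := by
    rw [← restrict_sub]
    congr 1
    abel
  have hsub := LinearMap.finrank_range_sub_le ((B₁ + B).restrict (B.orthogonal N))
    (B.restrict (B.orthogonal N))
  rw [← hB₁perp, finrank_range_restrict_of_sup_ker_eq_top h₁.isRefl hsup] at hsub
  omega

theorem exists_restrict_eq_zero_of_finrank_range_le (R : ℕ) (S : Set (BilinForm K V))
    (hadd : ∀ B ∈ S, ∀ B' ∈ S, B + B' ∈ S) (hsymm : ∀ B ∈ S, B.IsSymm)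
    (hR : ∀ B ∈ S, finrank K (range B) ≤ R) :
    ∃ W : Submodule K V, finrank K V ≤ finrank K W + 2 * R ∧ ∀ B ∈ S, B.restrict W = 0 := by
  induction R using Nat.strong_induction_on generalizing V with
  | _ R ih =>
  by_cases hS : ∀ B ∈ S, B = 0
  · exact ⟨⊤, by simp, fun B hB => by rw [hS B hB]; rfl⟩
  push Not at hS
  obtain ⟨B₀, hB₀S, hB₀⟩ := hS
  have hbdd : BddAbove ((fun B => finrank K (range B)) '' S) := ⟨R, Set.forall_mem_image.2 hR⟩
  obtain ⟨B₁, hB₁S, hB₁⟩ := Nat.sSup_mem ⟨_, Set.mem_image_of_mem _ hB₀S⟩ hbdd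
  have hmax : ∀ B ∈ S, finrank K (range B) ≤ finrank K (range B₁) :=
    fun B hB => (le_csSup hbdd (Set.mem_image_of_mem _ hB)).trans hB₁.ge
  have hpos : 0 < finrank K (range B₀) :=
    Nat.pos_of_ne_zero fun h => hB₀ (LinearMap.range_eq_bot.mp (Submodule.finrank_eq_zero.mp h))
  have hle : finrank K (range B₁) ≤ R := hR B₁ hB₁S
  obtain ⟨W, hW, hWS⟩ := ih (finrank K (range B₁) / 2) (by have := hmax B₀ hB₀S; omega)
    ((fun B => B.restrict (ker B₁)) '' S)
    (by
      rintro _ ⟨B, hB, rfl⟩ _ ⟨B', hB', rfl⟩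
      exact ⟨B + B', hadd B hB B' hB', restrict_add B B' _⟩)
    (by
      rintro _ ⟨B, hB, rfl⟩
      exact (hsymm B hB).restrict _)
    (by
      rintro _ ⟨B, hB, rfl⟩
      dsimp only
      have := finrank_range_add_two_mul_finrank_range_restrict_ker_le (hsymm B₁ hB₁S) (hsymm B hB)
      have := hmax _ (hadd _ hB₁S _ hB)
      have := hmax B hB
      omega)
  refine ⟨W.map (ker B₁).subtype, ?_, fun B hB => ?_⟩
  · have := LinearMap.finrank_range_add_finrank_ker B₁
    rw [Submodule.finrank_map_subtype_eq]
    omega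
  · ext ⟨_, x, hx, rfl⟩ ⟨_, y, hy, rfl⟩
    exact LinearMap.congr_fun₂ (hWS _ ⟨B, hB, rfl⟩) ⟨x, hx⟩ ⟨y, hy⟩

end LinearMap.BilinForm

section HasRank2

variable {K M : Type*} [Field K] [AddCommGroup M] [Module K M]

theorem hasRank2_zero (s : ℕ) : HasRank2 (0 : M → K) s :=
  ⟨0, 0, 0, 0, fun x => by simp⟩

theorem HasRank2.add {q q' : M → K} {s t : ℕ} (h : HasRank2 q s) (h' : HasRank2 q' t) :
    HasRank2 (q + q') (s + t) := by
  obtain ⟨L, L', L₀, b, hq⟩ := h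
  obtain ⟨N, N', N₀, c, hq'⟩ := h'
  refine ⟨Fin.append L N, Fin.append L' N', L₀ + N₀, b + c, fun x => ?_⟩
  simp only [Pi.add_apply, hq, hq', Fin.sum_univ_add, Fin.append_left, Fin.append_right,
    LinearMap.add_apply]
  ring

theorem HasRank2.mono {q : M → K} {s t : ℕ} (h : HasRank2 q s) (hst : s ≤ t) : HasRank2 q t := by
  simpa [Nat.add_sub_cancel' hst] using h.add (hasRank2_zero (t - s))

theorem hasRank2_rank2 {q : M → K} (h : ∃ s, HasRank2 q s) : HasRank2 q (rank2 q) :=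
  Nat.sInf_mem h

end HasRank2

section Polynomial

variable {K σ : Type*} [Field K]

theorem MvPolynomial.eval_monomial_eq_mul_prod_map_toMultiset (m : σ →₀ ℕ) (c : K) (x : σ → K) :
    eval x (monomial m c) = c * ((Finsupp.toMultiset m).map x).prod := by
  rw [eval_monomial, Finsupp.toMultiset_map, Finsupp.prod_toMultiset,
    Finsupp.prod_mapDomain_index (fun _ => pow_zero _) (fun _ _ _ => pow_add _ _ _)]

theorem hasRank2_eval_monomial {m : σ →₀ ℕ} (hm : (m.sum fun _ e => e) ≤ 2) (c : K) :
    HasRank2 (fun x => MvPolynomial.eval x (MvPolynomial.monomial m c)) 1 := by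
  simp_rw [MvPolynomial.eval_monomial_eq_mul_prod_map_toMultiset]
  have hcard : Multiset.card (Finsupp.toMultiset m) ≤ 2 := by rw [Finsupp.card_toMultiset]; exact hm
  interval_cases h : Multiset.card (Finsupp.toMultiset m)
  · rw [Multiset.card_eq_zero.mp h]
    exact ⟨0, 0, 0, c, fun x => by simp⟩
  · obtain ⟨i, hi⟩ := Multiset.card_eq_one.mp h
    rw [hi]
    exact ⟨0, 0, c • LinearMap.proj i, 0, fun x => by simp⟩
  · obtain ⟨i, j, hij⟩ := Multiset.card_eq_two.mp h
    rw [hij]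
    exact ⟨fun _ => c • LinearMap.proj i, fun _ => LinearMap.proj j, 0, 0,
      fun x => by simp [mul_assoc]⟩

theorem IsPolyDegLE.exists_hasRank2 {q : (σ → K) → K} (h : IsPolyDegLE q 2) :
    ∃ s, HasRank2 q s := by
  obtain ⟨P, hP, hPq⟩ := h
  have hq : q = ∑ m ∈ P.support,
      fun x => MvPolynomial.eval x (MvPolynomial.monomial m (P.coeff m)) := by
    ext x
    rw [← hPq, Finset.sum_apply, ← map_sum, ← MvPolynomial.as_sum]
  rw [hq]
  refine Finset.sum_induction _ (fun f => ∃ s, HasRank2 f s)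
    (fun _ _ ⟨s, hs⟩ ⟨t, ht⟩ => ⟨s + t, hs.add ht⟩) ⟨0, hasRank2_zero 0⟩ fun m hm => ?_
  exact ⟨1, hasRank2_eval_monomial ((MvPolynomial.le_totalDegree hm).trans hP) _⟩

end Polynomial

section Polar

variable {K M : Type*} [Field K] [AddCommGroup M] [Module K M] [FiniteDimensional K M]

open LinearMap.BilinForm in
theorem HasRank2.exists_bilinForm {q : M → K} {s : ℕ} (h : HasRank2 q s) :
    ∃ B : BilinForm K M, finrank K (range B) ≤ 2 * s ∧
      ∀ x y, B x y = q (x + y) - q x - q y + q 0 := by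
  obtain ⟨L, L', L₀, b, hq⟩ := h
  refine ⟨∑ i, (linMulLin (L i) (L' i) + linMulLin (L' i) (L i)), ?_, fun x y => ?_⟩
  · calc finrank K (range (∑ i, (linMulLin (L i) (L' i) + linMulLin (L' i) (L i))))
        ≤ ∑ i, finrank K (range (linMulLin (L i) (L' i) + linMulLin (L' i) (L i))) :=
          Finset.le_sum_of_subadditive (fun f : BilinForm K M => finrank K (LinearMap.range f))
            (by simp) LinearMap.finrank_range_add_le _ _
      _ ≤ ∑ _i : Fin s, 2 := Finset.sum_le_sum fun i _ =>
          (LinearMap.finrank_range_add_le _ _).trans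
            (add_le_add (finrank_range_linMulLin_le _ _) (finrank_range_linMulLin_le _ _))
      _ = 2 * s := by simp [mul_comm]
  · simp only [hq, map_add, map_zero, LinearMap.sum_apply, LinearMap.add_apply, linMulLin_apply]
    rw [Finset.sum_congr rfl fun i _ => show (L i) x * (L' i) y + (L' i) x * (L i) y
      = ((L i) x + (L i) y) * ((L' i) x + (L' i) y) - (L i) x * (L' i) x - (L i) y * (L' i) y
      by ring]
    simp only [Finset.sum_sub_distrib, mul_zero, add_zero, Finset.sum_const_zero]
    ring

theorem exists_forall_polar_eq_zero_of_hasRank2 (Q : Set (M → K))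
    (hadd : ∀ q ∈ Q, ∀ q' ∈ Q, q + q' ∈ Q) (r : ℕ) (hQ : ∀ q ∈ Q, HasRank2 q r) :
    ∃ W : Submodule K M, finrank K M ≤ finrank K W + 4 * r ∧
      ∀ q ∈ Q, ∀ x ∈ W, ∀ y ∈ W, q (x + y) - q x - q y + q 0 = 0 := by
  obtain ⟨W, hW, hWS⟩ := LinearMap.BilinForm.exists_restrict_eq_zero_of_finrank_range_le (2 * r)
    {B | ∃ q ∈ Q, ∀ x y, B x y = q (x + y) - q x - q y + q 0}
    (by
      rintro B ⟨q, hq, hB⟩ B' ⟨q', hq', hB'⟩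
      refine ⟨q + q', hadd q hq q' hq', fun x y => ?_⟩
      simp only [LinearMap.add_apply, Pi.add_apply, hB, hB']
      ring)
    (by
      rintro B ⟨q, -, hB⟩
      exact ⟨fun x y => by rw [hB, hB, add_comm x]; ring⟩)
    (by
      rintro B ⟨q, hq, hB⟩
      obtain ⟨B', hB'r, hB'⟩ := (hQ q hq).exists_bilinForm
      rwa [LinearMap.ext₂ fun x y => (hB x y).trans (hB' x y).symm])
  refine ⟨W, by omega, fun q hq x hx y hy => ?_⟩
  obtain ⟨B, -, hB⟩ := (hQ q hq).exists_bilinForm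
  rw [← hB]
  exact LinearMap.congr_fun₂ (hWS B ⟨q, hq, hB⟩) ⟨x, hx⟩ ⟨y, hy⟩

end Polar

-- Additive maps of `ZMod n`-modules are linear: the only place where the field `F₂` matters.
theorem exists_linearMap_add_const_of_polar_eq_zero {n : ℕ} {V : Type*} [AddCommGroup V]
    [Module (ZMod n) V] {q : V → ZMod n} (h : ∀ x y, q (x + y) - q x - q y + q 0 = 0) :
    ∃ (L : V →ₗ[ZMod n] ZMod n) (b : ZMod n), ∀ x, q x = L x + b := by
  let f : V →+ ZMod n := AddMonoidHom.mk' (fun x => q x - q 0) fun x y => by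
    linear_combination h x y
  exact ⟨f.toZModLinearMap n, q 0, fun x => by simp [f]⟩

/-- If `M` is a linear space of quadratic polynomials over `F_2^n` all of rank at
most `r`, then there is a subspace `V` of codimension at most `4r` on which every
`p ∈ M` restricts to an affine function. -/
theorem stmt_9 {n : ℕ} (M : Submodule (ZMod 2) ((Fin n → ZMod 2) → ZMod 2)) (r : ℕ)
    (hquad : ∀ q ∈ M, IsPolyDegLE q 2)
    (hrank : ∀ q ∈ M, rank2 q ≤ r) :
    ∃ V : Submodule (ZMod 2) (Fin n → ZMod 2),
      n ≤ Module.finrank (ZMod 2) V + 4 * r ∧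
      ∀ q ∈ M, ∃ (L : V →ₗ[ZMod 2] ZMod 2) (b : ZMod 2),
        ∀ x : V, q x = L x + b := by
  obtain ⟨W, hW, hWM⟩ := exists_forall_polar_eq_zero_of_hasRank2 (M : Set _)
    (fun q hq q' hq' => M.add_mem hq hq') r
    (fun q hq => (hasRank2_rank2 (hquad q hq).exists_hasRank2).mono (hrank q hq))
  refine ⟨W, by simpa using hW, fun q hq => exists_linearMap_add_const_of_polar_eq_zero ?_⟩
  intro x y
  simpa using hWM q hq x x.2 y y.2
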